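/- arXiv:0806.3468 — 2 statements merged into one kernel-verified Lean document; each statement's English description precedes it below -/
import Mathlib

section
/- Let (x_m)_{m≥1} be a real sequence with x₁ = 1 and write B(n,k) := B_{n,k}(x₁, x₂, x₃, ...). For natural numbers r, s and n ≥ k ≥ 1, one has B_{n,k}(B(s,s), ..., (ms/(r(m-1)+s)) · B((r+1)(m-1)+s, r(m-1)+s) / C((r+1)(m-1)+s, r(m-1)+s), ...) = C(n,k) · (sk/(r(n-k)+sk)) · B((r+1)(n-k)+sk, r(n-k)+sk) / C((r+1)(n-k)+sk, r(n-k)+sk), where the m-th argument of the outer Bell polynomial is (ms/(r(m-1)+s)) · B((r+1)(m-1)+s, r(m-1)+s) / C((r+1)(m-1)+s, r(m-1)+s); assume r + s ≥ 1 so all denominators are positive. -/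
/-!
The exponential generating function of `x` is `X * F` with `F(0) = x₁ = 1`, so that
`B_{n,k}(x) = n!/k! [X^(n-k)] F^k`. The arguments of the outer Bell polynomial have exponential
generating function `X * L_s`, where `L_a = ∑ⱼ a/(rj+a) [Xʲ] F^(rj+a) Xʲ`. By Lagrange
inversion, `L_a` lists the coefficients of `F^a` expanded in powers of `V = X / F^r`; expanding
in powers of `V` is multiplicative, hence `L_s^k = L_{sk}`, and comparing coefficients of
`X^(n-k)` gives the identity.
-/

open Finset

/-- The exponential partial Bell polynomial `B_{n,k}(x₁,x₂,…)`, defined via the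
generating function `∑_{n} B_{n,k} tⁿ/n! = (1/k!) (∑_{m≥1} x_m t^m/m!)^k`. -/
noncomputable def bellB (n k : ℕ) (x : ℕ → ℝ) : ℝ :=
  ((Nat.factorial n : ℝ) / (Nat.factorial k : ℝ)) *
    PowerSeries.coeff n
      ((PowerSeries.mk fun m => if m = 0 then 0 else x m / (Nat.factorial m : ℝ)) ^ k)

/-- The complete Bell polynomial `A_n(x₁,…,x_n) = ∑_{k=1}^n B_{n,k}`, `A₀ = 1`. -/
noncomputable def bellA (n : ℕ) (x : ℕ → ℝ) : ℝ :=
  if n = 0 then 1 else ∑ k ∈ Finset.Icc 1 n, bellB n k x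

open PowerSeries

namespace PowerSeries

theorem natCast_mul_pow_mul_derivative_pow {R : Type*} [CommSemiring R] (F : R⟦X⟧) (m n : ℕ) :
    (n : R⟦X⟧) * F ^ n * d⁄dX R (F ^ m) = m * F ^ m * d⁄dX R (F ^ n) := by
  rw [derivative_pow, derivative_pow]
  rcases m with _ | m <;> rcases n with _ | n
  all_goals simp only [Nat.cast_zero, zero_mul, mul_zero, Nat.add_sub_cancel]
  ring

theorem coeff_X_mul_derivative {R : Type*} [CommSemiring R] (f : R⟦X⟧) (n : ℕ) :
    coeff n (X * d⁄dX R f) = n * coeff n f := by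
  rcases n with _ | n
  · simp
  · rw [coeff_succ_X_mul, coeff_derivative, mul_comm]
    push_cast
    rfl

theorem coeff_succ_pow_succ_eq_coeff_pow_mul_derivative {K : Type*} [Field K] [CharZero K]
    (φ : K⟦X⟧) (i : ℕ) :
    coeff (i + 1) (φ ^ (i + 1)) = coeff i (φ ^ i * d⁄dX K φ) := by
  have h := coeff_derivative (φ ^ (i + 1)) i
  rw [derivative_pow, Nat.add_sub_cancel, mul_assoc, ← map_natCast (C (R := K)), coeff_C_mul] at h
  push_cast at h
  exact (mul_left_cancel₀ (Nat.cast_add_one_ne_zero i) (h.trans (mul_comm _ _))).symm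

end PowerSeries

namespace LagrangeInversion

variable {K : Type*} [Field K] (φ : K⟦X⟧)

/-- With `V = X * φ⁻¹`, this is `P ↦ (P - P(0)) / V`, so that `P = P(0) + V * shiftV φ P`. -/
noncomputable def shiftV : K⟦X⟧ →ₗ[K] K⟦X⟧ where
  toFun P := φ * mk fun i => coeff (i + 1) P
  map_add' P Q := by
    rw [← mul_add]
    rfl
  map_smul' c P := by
    have hshift : (mk fun i => coeff (i + 1) (c • P)) = c • mk fun i => coeff (i + 1) P := by
      ext
      simp
    rw [hshift, mul_smul_comm]
    rfl

/-- The coefficients of the expansion of `P` in powers of `V = X * φ⁻¹`; that is, the series `Q`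
with `Q(V) = P`. -/
noncomputable def expandV : K⟦X⟧ →ₗ[K] K⟦X⟧ where
  toFun P := mk fun m => constantCoeff ((shiftV φ ^ m) P)
  map_add' P Q := by
    ext
    simp
  map_smul' c P := by
    ext
    simp [constantCoeff_smul]

theorem shiftV_apply (P : K⟦X⟧) : shiftV φ P = φ * mk fun i => coeff (i + 1) P := rfl

theorem shiftV_C (a : K) : shiftV φ (C a) = 0 := by
  rw [shiftV_apply]
  convert mul_zero φ
  ext (_ | i) <;> simp

theorem coeff_expandV (m : ℕ) (P : K⟦X⟧) :
    coeff m (expandV φ P) = constantCoeff ((shiftV φ ^ m) P) := by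
  simp [expandV]

theorem expandV_eq_C_add_X_mul (P : K⟦X⟧) :
    expandV φ P = C (constantCoeff P) + X * expandV φ (shiftV φ P) := by
  ext (_ | m)
  · simp [coeff_expandV]
  · simp [coeff_expandV, coeff_succ_X_mul, pow_succ]

theorem expandV_C (a : K) : expandV φ (C a) = C a := by
  rw [expandV_eq_C_add_X_mul, shiftV_C, map_zero, mul_zero, add_zero, constantCoeff_C]

theorem expandV_C_mul (a : K) (P : K⟦X⟧) : expandV φ (C a * P) = C a * expandV φ P := by
  rw [← smul_eq_C_mul, ← smul_eq_C_mul, map_smul]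

variable {φ} (hφ : constantCoeff φ ≠ 0)
include hφ

theorem shiftV_X_mul_inv_mul (W : K⟦X⟧) : shiftV φ (X * φ⁻¹ * W) = W := by
  have hshift : (mk fun i => coeff (i + 1) (X * φ⁻¹ * W)) = φ⁻¹ * W := by
    ext
    simp [mul_assoc, coeff_succ_X_mul]
  rw [shiftV_apply, hshift, ← mul_assoc, PowerSeries.mul_inv_cancel φ hφ, one_mul]

theorem eq_C_add_X_mul_inv_mul_shiftV (P : K⟦X⟧) :
    P = C (constantCoeff P) + X * φ⁻¹ * shiftV φ P := by
  conv_lhs => rw [eq_X_mul_shift_add_const P]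
  rw [shiftV_apply, mul_assoc X, ← mul_assoc φ⁻¹, PowerSeries.inv_mul_cancel φ hφ, one_mul,
    add_comm]

theorem expandV_X_mul_inv_mul (W : K⟦X⟧) : expandV φ (X * φ⁻¹ * W) = X * expandV φ W := by
  rw [expandV_eq_C_add_X_mul, shiftV_X_mul_inv_mul hφ]
  simp

theorem expandV_mul (P Q : K⟦X⟧) : expandV φ (P * Q) = expandV φ P * expandV φ Q := by
  ext n
  induction n using Nat.strong_induction_on generalizing P Q with
  | _ n ih =>
  set P₁ := shiftV φ P
  set Q₁ := shiftV φ Q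
  have hPQ : P * Q = C (constantCoeff P * constantCoeff Q) + X * φ⁻¹ *
      (C (constantCoeff P) * Q₁ + C (constantCoeff Q) * P₁ + X * φ⁻¹ * (P₁ * Q₁)) := by
    conv_lhs => rw [eq_C_add_X_mul_inv_mul_shiftV hφ P, eq_C_add_X_mul_inv_mul_shiftV hφ Q]
    rw [map_mul]
    ring
  -- The defect of multiplicativity at `(P, Q)` is `X ^ 2` times the defect at `(P₁, Q₁)`.
  have hdefect : expandV φ (P * Q) - expandV φ P * expandV φ Q =
      X ^ 2 * (expandV φ (P₁ * Q₁) - expandV φ P₁ * expandV φ Q₁) := by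
    rw [hPQ]
    simp only [map_add, expandV_C, expandV_C_mul, expandV_X_mul_inv_mul hφ]
    rw [expandV_eq_C_add_X_mul (P := P), expandV_eq_C_add_X_mul (P := Q), map_mul]
    ring
  rw [← sub_eq_zero, ← map_sub, hdefect, coeff_X_pow_mul']
  split_ifs with h
  · rw [map_sub, ih (n - 2) (by omega), sub_self]
  · rfl

theorem expandV_pow (P : K⟦X⟧) (k : ℕ) : expandV φ (P ^ k) = expandV φ P ^ k := by
  induction k with
  | zero => simpa using expandV_C φ 1
  | succ k ih => rw [pow_succ, expandV_mul hφ, ih, pow_succ]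

/-- Lagrange–Bürmann formula for the coefficients of `P` in powers of `X * φ⁻¹`. -/
theorem coeff_expandV_eq [CharZero K] (j : ℕ) (P : K⟦X⟧) :
    coeff j (expandV φ P) = coeff j (P * φ ^ j * (1 - X * d⁄dX K φ * φ⁻¹)) := by
  induction j generalizing P with
  | zero => simp [coeff_expandV]
  | succ j ih =>
    have hsplit : P * φ ^ (j + 1) * (1 - X * d⁄dX K φ * φ⁻¹) =
        C (constantCoeff P) * (φ ^ (j + 1) - X * (φ ^ j * d⁄dX K φ)) +
          X * (shiftV φ P * φ ^ j * (1 - X * d⁄dX K φ * φ⁻¹)) := by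
      conv_lhs => rw [eq_C_add_X_mul_inv_mul_shiftV hφ P]
      linear_combination (X * shiftV φ P * φ ^ j * (1 - X * d⁄dX K φ * φ⁻¹) -
        C (constantCoeff P) * X * d⁄dX K φ * φ ^ j) * PowerSeries.mul_inv_cancel φ hφ
    rw [hsplit, map_add, coeff_C_mul, map_sub, coeff_succ_X_mul, coeff_succ_X_mul, ← ih,
      coeff_succ_pow_succ_eq_coeff_pow_mul_derivative, sub_self, mul_zero, zero_add, coeff_expandV,
      coeff_expandV, pow_succ, Module.End.mul_apply]

end LagrangeInversion

open LagrangeInversion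

section LagrangeSeries

variable {K : Type*} [Field K]

/-- By Lagrange inversion, `lagrangeSeries F r a = W ^ a` where `W = F (X * W ^ r)`. -/
noncomputable def lagrangeSeries (F : K⟦X⟧) (r a : ℕ) : K⟦X⟧ :=
  mk fun j => (a : K) / ((r * j + a : ℕ) : K) * coeff j (F ^ (r * j + a))

theorem coeff_lagrangeSeries (F : K⟦X⟧) (r a j : ℕ) :
    coeff j (lagrangeSeries F r a) =
      (a : K) / ((r * j + a : ℕ) : K) * coeff j (F ^ (r * j + a)) :=
  coeff_mk _ _

theorem lagrangeSeries_zero_right (F : K⟦X⟧) (r : ℕ) : lagrangeSeries F r 0 = 0 := by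
  ext
  simp [coeff_lagrangeSeries]

variable [CharZero K] {F : K⟦X⟧} (hF : constantCoeff F ≠ 0)
include hF

theorem lagrangeSeries_eq_expandV (r : ℕ) {a : ℕ} (ha : a ≠ 0) :
    lagrangeSeries F r a = expandV (F ^ r) (F ^ a) := by
  have hFr : constantCoeff (F ^ r) ≠ 0 := by simpa using pow_ne_zero r hF
  ext j
  set N := r * j + a with hN
  -- The kernel term is `r / N * X * d⁄dX (F ^ N)`, whose `j`-th coefficient is `r j / N` times
  -- that of `F ^ N`; and `N - r j = a`.
  have hkernel : (N : K⟦X⟧) * (F ^ N * (1 - X * d⁄dX K (F ^ r) * (F ^ r)⁻¹)) =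
      (N : K⟦X⟧) * F ^ N - (r : K⟦X⟧) * (X * d⁄dX K (F ^ N)) := by
    linear_combination (-X * (F ^ r)⁻¹) * natCast_mul_pow_mul_derivative_pow F r N +
      (-(r : K⟦X⟧) * X * d⁄dX K (F ^ N)) * PowerSeries.mul_inv_cancel _ hFr
  have hcoeff := congrArg (coeff j) hkernel
  simp only [map_sub, ← map_natCast (C (R := K)), coeff_C_mul, coeff_X_mul_derivative] at hcoeff
  rw [coeff_lagrangeSeries, coeff_expandV_eq hFr, ← pow_mul, ← pow_add, add_comm a, ← hN]
  have hN0 : (N : K) ≠ 0 := Nat.cast_ne_zero.mpr (by omega)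
  field_simp
  push_cast [hN] at hcoeff ⊢
  linear_combination -hcoeff

theorem lagrangeSeries_pow (r a : ℕ) {k : ℕ} (hk : k ≠ 0) :
    lagrangeSeries F r a ^ k = lagrangeSeries F r (a * k) := by
  rcases eq_or_ne a 0 with rfl | ha
  · rw [lagrangeSeries_zero_right, zero_mul, lagrangeSeries_zero_right, zero_pow hk]
  · rw [lagrangeSeries_eq_expandV hF r ha, lagrangeSeries_eq_expandV hF r (mul_ne_zero ha hk),
      pow_mul, expandV_pow (by simpa using pow_ne_zero r hF) (F ^ a) k]

end LagrangeSeries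

section Bell

/-- `∑_{m ≥ 1} y m * X ^ m / m!`; the value `y 0` plays no role. -/
noncomputable def egf (y : ℕ → ℝ) : ℝ⟦X⟧ :=
  mk fun m => if m = 0 then 0 else y m / (Nat.factorial m : ℝ)

theorem egf_eq_X_mul (y : ℕ → ℝ) :
    egf y = X * PowerSeries.mk fun i => y (i + 1) / (Nat.factorial (i + 1) : ℝ) := by
  ext (_ | i)
  · simp [egf]
  · rw [coeff_succ_X_mul, egf, coeff_mk, coeff_mk, if_neg i.succ_ne_zero]

variable {y : ℕ → ℝ} {G : ℝ⟦X⟧} (hG : egf y = X * G)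
include hG

theorem bellB_eq_of_egf_eq_X_mul {n k : ℕ} (hkn : k ≤ n) :
    bellB n k y = n.choose k * (n - k).factorial * coeff (n - k) (G ^ k) := by
  rw [bellB, ← egf, hG, mul_pow, coeff_X_pow_mul', if_pos hkn,
    ← Nat.choose_mul_factorial_mul_factorial hkn]
  push_cast
  field_simp

theorem bellB_add_div_choose_of_egf_eq_X_mul (N j : ℕ) :
    bellB (N + j) N y / (N + j).choose N = j.factorial * coeff j (G ^ N) := by
  have hchoose : ((N + j).choose N : ℝ) ≠ 0 :=
    Nat.cast_ne_zero.mpr (Nat.choose_pos (Nat.le_add_right N j)).ne'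
  rw [bellB_eq_of_egf_eq_X_mul hG (Nat.le_add_right N j), Nat.add_sub_cancel_left]
  field_simp

end Bell

theorem egf_eq_X_mul_lagrangeSeries {x : ℕ → ℝ} {F : ℝ⟦X⟧} (hF : egf x = X * F)
    (r s : ℕ) :
    egf (fun m => ((m * s : ℕ) : ℝ) / ((r * (m - 1) + s : ℕ) : ℝ) *
        bellB ((r + 1) * (m - 1) + s) (r * (m - 1) + s) x /
          ((((r + 1) * (m - 1) + s).choose (r * (m - 1) + s) : ℕ) : ℝ)) =
      X * lagrangeSeries F r s := by
  rw [egf_eq_X_mul]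
  congr 1
  ext j
  rw [coeff_mk, coeff_lagrangeSeries, Nat.add_sub_cancel, mul_div_assoc _ (bellB _ _ x),
    show (r + 1) * j + s = r * j + s + j by ring, bellB_add_div_choose_of_egf_eq_X_mul hF,
    Nat.factorial_succ]
  push_cast
  field_simp

theorem stmt_11_general (x : ℕ → ℝ) (hx1 : x 1 = 1) (r s : ℕ)
    (n k : ℕ) (hk : 1 ≤ k) (hkn : k ≤ n) :
    bellB n k
        (fun m => ((m * s : ℕ) : ℝ) / ((r * (m - 1) + s : ℕ) : ℝ) *
          bellB ((r + 1) * (m - 1) + s) (r * (m - 1) + s) x /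
            ((((r + 1) * (m - 1) + s).choose (r * (m - 1) + s) : ℕ) : ℝ)) =
      (n.choose k : ℝ) * ((s * k : ℕ) : ℝ) / ((r * (n - k) + s * k : ℕ) : ℝ) *
        bellB ((r + 1) * (n - k) + s * k) (r * (n - k) + s * k) x /
          ((((r + 1) * (n - k) + s * k).choose (r * (n - k) + s * k) : ℕ) : ℝ) := by
  set F : ℝ⟦X⟧ := mk fun i => x (i + 1) / (Nat.factorial (i + 1) : ℝ)
  have hF : egf x = X * F := egf_eq_X_mul x
  have hF0 : constantCoeff F ≠ 0 := by simp [F, hx1]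
  rw [bellB_eq_of_egf_eq_X_mul (egf_eq_X_mul_lagrangeSeries hF r s) hkn,
    lagrangeSeries_pow hF0 r s (by omega), coeff_lagrangeSeries, mul_div_assoc _ (bellB _ _ x),
    show (r + 1) * (n - k) + s * k = r * (n - k) + s * k + (n - k) by ring,
    bellB_add_div_choose_of_egf_eq_X_mul hF]
  ring

theorem stmt_11 (x : ℕ → ℝ) (hx1 : x 1 = 1) (r s : ℕ) (hrs : 1 ≤ r + s)
    (n k : ℕ) (hk : 1 ≤ k) (hkn : k ≤ n) :
    bellB n k
        (fun m => ((m * s : ℕ) : ℝ) / ((r * (m - 1) + s : ℕ) : ℝ) *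
          bellB ((r + 1) * (m - 1) + s) (r * (m - 1) + s) x /
            ((((r + 1) * (m - 1) + s).choose (r * (m - 1) + s) : ℕ) : ℝ)) =
      (n.choose k : ℝ) * ((s * k : ℕ) : ℝ) / ((r * (n - k) + s * k : ℕ) : ℝ) *
        bellB ((r + 1) * (n - k) + s * k) (r * (n - k) + s * k) x /
          ((((r + 1) * (n - k) + s * k).choose (r * (n - k) + s * k) : ℕ) : ℝ) :=
  stmt_11_general x hx1 r s n k hk hkn
end

section
/- For real numbers x, α and natural numbers n ≥ 1, r ≥ 1, s ≥ 0, set R := nr + s and define Z(n,s) := (1/R) ∑_{j=0}^n C(R, j) (n!/(n-j)!) R^{n-j} α^j x^{n-j} evaluated at x = 1, i.e. Z(n,s) = (1/R) ∑_{j=0}^n C(R,j) (n!/(n-j)!) R^{n-j} α^j. Then the complete Bell polynomials satisfy A_n(s·Z(1,0), s·Z(2,0), ..., s·Z(n,0)) = s·Z(n,s) for all n ≥ 1 and s ≥ 1, where Z(m,0) uses R = mr. -/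
open Finset

/-- `Z(n,s) = (1/R) ∑_{j=0}^n C(R,j)·(n!/(n-j)!)·R^{n-j}·α^j`, `R = nr+s`. -/
noncomputable def Z17 (r : ℕ) (α : ℝ) (n s : ℕ) : ℝ :=
  (1 / ((n * r + s : ℕ) : ℝ)) *
    ∑ j ∈ Finset.range (n + 1),
      ((n * r + s).choose j : ℝ) * ((Nat.factorial n : ℝ) / (Nat.factorial (n - j) : ℝ)) *
        ((n * r + s : ℕ) : ℝ) ^ (n - j) * α ^ j

/-! With `F = F17 α = (1 + αX) eˣ` one has `n! [Xⁿ] F^N = ∑ⱼ C(N,j) (n!/(n-j)!) N^(n-j) αʲ`, so that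
`s Z(n,s) = s n! [Xⁿ] F^(nr+s) / (nr+s)`. Let `w` solve `w = X F(w)^r` and let `L = log F`.
Lagrange inversion gives `[Xⁿ] F(w)^s = s/(nr+s) [Xⁿ] F^(nr+s)` and `[Xⁿ] L(w) = [Xⁿ] F^(nr)/(nr)`,
so `s L(w)` is the exponential generating function of the `s Z(m,0)`. The complete Bell
polynomials are the coefficients of the exponential of an exponential generating function, and
`exp (s L(w)) = F(w)^s` because both sides solve `y' = s L(w)' y`, `y(0) = 1`. -/

namespace PowerSeries

section CommRing

variable {R : Type*} [CommRing R]

theorem coeff_pow_eq_zero_of_lt {w : R⟦X⟧} (hw : constantCoeff w = 0) {n k : ℕ} (h : n < k) :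
    coeff n (w ^ k) = 0 :=
  X_pow_dvd_iff.mp (pow_dvd_pow_of_dvd (X_dvd_iff.mpr hw) k) n h

theorem coeff_subst_eq_sum {w : R⟦X⟧} (hw : constantCoeff w = 0) (f : R⟦X⟧) (n : ℕ) :
    coeff n (f.subst w) = ∑ k ∈ range (n + 1), coeff k f * coeff n (w ^ k) := by
  rw [coeff_subst' (HasSubst.of_constantCoeff_zero' hw)]
  refine finsum_eq_sum_of_support_subset _ fun k hk => ?_
  by_contra hkn
  simp only [coe_range, Set.mem_Iio, not_lt] at hkn
  exact hk (by simp [coeff_pow_eq_zero_of_lt hw (Nat.lt_of_succ_le hkn)])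

theorem constantCoeff_subst_of_constantCoeff_eq_zero {w : R⟦X⟧} (hw : constantCoeff w = 0)
    (f : R⟦X⟧) : constantCoeff (f.subst w) = constantCoeff f := by
  simpa using coeff_subst_eq_sum hw f 0

theorem coeff_subst_mul_eq_sum {w : R⟦X⟧} (hw : constantCoeff w = 0) (f A : R⟦X⟧) (n : ℕ) :
    coeff n (f.subst w * A) = ∑ k ∈ range (n + 1), coeff k f * coeff n (w ^ k * A) := by
  have extend : ∀ p ∈ antidiagonal n, coeff p.1 (f.subst w) * coeff p.2 A =
      ∑ k ∈ range (n + 1), coeff k f * (coeff p.1 (w ^ k) * coeff p.2 A) := by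
    intro p hp
    have hpn : p.1 + p.2 = n := mem_antidiagonal.mp hp
    rw [coeff_subst_eq_sum hw, sum_mul]
    refine sum_subset_zero_on_sdiff (range_subset_range.mpr (by omega)) (fun k hk => ?_)
      (fun k _ => by ring)
    have : p.1 < k := by simp only [mem_sdiff, mem_range] at hk; omega
    rw [coeff_pow_eq_zero_of_lt hw this, zero_mul, mul_zero]
  rw [coeff_mul, sum_congr rfl extend, sum_comm]
  simp only [← mul_sum, ← coeff_mul]

theorem nsmul_derivative_pow_mul_pow (F : R⟦X⟧) (s m : ℕ) :
    (m + s) • (d⁄dX R (F ^ s) * F ^ m) = s • d⁄dX R (F ^ (m + s)) := by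
  rcases s with _ | s
  · simp
  · rw [derivative_pow, derivative_pow, ← add_assoc, Nat.add_sub_cancel, Nat.add_sub_cancel]
    simp only [nsmul_eq_mul]
    push_cast
    ring

theorem nsmul_derivative_mul_pow {L F : R⟦X⟧} (hLF : d⁄dX R L * F = d⁄dX R F) (m : ℕ) :
    m • (d⁄dX R L * F ^ m) = d⁄dX R (F ^ m) := by
  rcases m with _ | m
  · simp
  · rw [derivative_pow, ← hLF, Nat.add_sub_cancel, nsmul_eq_mul, pow_succ]
    ring

theorem derivative_subst_mul_subst {L F w : R⟦X⟧} (hw : constantCoeff w = 0)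
    (hLF : d⁄dX R L * F = d⁄dX R F) :
    d⁄dX R (L.subst w) * F.subst w = d⁄dX R (F.subst w) := by
  have hW := HasSubst.of_constantCoeff_zero' hw
  rw [derivative_subst hW, derivative_subst hW, ← hLF, subst_mul hW]
  ring

theorem coeff_one_add_X_pow (N n : ℕ) :
    coeff n ((1 + X : R⟦X⟧) ^ N) = N.choose n := by
  rw [← Polynomial.coe_one, ← Polynomial.coe_X, ← Polynomial.coe_add, ← Polynomial.coe_pow,
    Polynomial.coeff_coe, Polynomial.coeff_one_add_X_pow]

end CommRing

section Field

variable {K : Type*} [Field K]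

theorem exists_eq_X_mul_subst {Φ : K⟦X⟧} (hΦ : constantCoeff Φ ≠ 0) :
    ∃ w : K⟦X⟧, w = X * Φ.subst w := by
  set P : K⟦X⟧ := X * Φ⁻¹
  have hP : constantCoeff P = 0 := by simp [P]
  have hP1 : IsUnit (coeff 1 P) := by simpa [P, coeff_succ_X_mul] using hΦ
  set w := P.substInvOfIsUnit hP1
  have hw : HasSubst w := HasSubst.substInvOfIsUnit P hP1
  have hPw : w * (Φ⁻¹).subst w = X := by
    rw [← subst_substInvOfIsUnit_right P hP hP1, subst_mul hw, subst_X hw]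
  have hΦw : Φ.subst w * (Φ⁻¹).subst w = 1 := by
    rw [← subst_mul hw, PowerSeries.mul_inv_cancel Φ hΦ, ← map_one (C (R := K)), subst_C]
    rfl
  refine ⟨w, ?_⟩
  calc w = w * (Φ.subst w * (Φ⁻¹).subst w) := by rw [hΦw, mul_one]
    _ = X * Φ.subst w := by rw [← hPw]; ring

variable [CharZero K]

theorem eq_of_derivative_eq_mul {D p q : K⟦X⟧} (hp : d⁄dX K p = D * p)
    (hq : d⁄dX K q = D * q) (h0 : constantCoeff p = constantCoeff q) : p = q := by
  ext n
  induction n using Nat.strong_induction_on with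
  | _ n ih =>
    rcases n with _ | n
    · simpa using h0
    · have hD : coeff n (D * p) = coeff n (D * q) := by
        rw [coeff_mul, coeff_mul]
        refine sum_congr rfl fun ab hab => ?_
        rw [ih ab.2 (by have := mem_antidiagonal.mp hab; omega)]
      have hn : coeff (n + 1) p * (n + 1) = coeff (n + 1) q * (n + 1) := by
        rw [← coeff_derivative, ← coeff_derivative, hp, hq, hD]
      exact mul_right_cancel₀ (Nat.cast_add_one_ne_zero n) hn

theorem exists_log (F : K⟦X⟧) (hF : constantCoeff F ≠ 0) :
    ∃ L : K⟦X⟧, constantCoeff L = 0 ∧ d⁄dX K L * F = d⁄dX K F := by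
  set f := d⁄dX K F * F⁻¹
  refine ⟨mk fun n => if n = 0 then 0 else coeff (n - 1) f / n, by simp, ?_⟩
  suffices hL : d⁄dX K (mk fun n => if n = 0 then 0 else coeff (n - 1) f / n) = f by
    rw [hL, mul_assoc, PowerSeries.inv_mul_cancel F hF, mul_one]
  ext n
  rw [coeff_derivative, coeff_mk, if_neg n.succ_ne_zero, Nat.add_sub_cancel, Nat.cast_add_one,
    div_mul_cancel₀ _ (Nat.cast_add_one_ne_zero n)]

theorem exp_subst_nsmul_eq_pow {L F : K⟦X⟧} (hL : constantCoeff L = 0) (hF : constantCoeff F = 1)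
    (hLF : d⁄dX K L * F = d⁄dX K F) (s : ℕ) : (exp K).subst (s • L) = F ^ s := by
  have hsL : constantCoeff (s • L) = 0 := by simp [hL]
  refine eq_of_derivative_eq_mul (D := s • d⁄dX K L) ?_ ?_ ?_
  · rw [derivative_subst (HasSubst.of_constantCoeff_zero' hsL), derivative_exp,
      map_nsmul, mul_comm]
  · rcases s with _ | s
    · simp
    · rw [derivative_pow, ← hLF, Nat.add_sub_cancel, pow_succ, nsmul_eq_mul]
      push_cast
      ring
  · rw [constantCoeff_subst_of_constantCoeff_eq_zero hsL, constantCoeff_exp, map_pow, hF, one_pow]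

theorem coeff_derivative_X_mul_mul_inv_pow {v : K⟦X⟧} (hv : constantCoeff v ≠ 0) (j : ℕ) :
    coeff (j + 1) (d⁄dX K (X * v) * v⁻¹ ^ (j + 2)) = 0 := by
  have hu : v * v⁻¹ = 1 := PowerSeries.mul_inv_cancel v hv
  -- `(X v)' / (X v)^(j+2) = -((X v)^(-j-1))' / (j+1)` has no residue; times `(j+1) X^(j+2)`:
  have key : (j + 1) • (d⁄dX K (X * v) * v⁻¹ ^ (j + 2)) =
      (j + 1) • v⁻¹ ^ (j + 1) - X * d⁄dX K (v⁻¹ ^ (j + 1)) := by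
    rw [derivative_pow, derivative_inv', Derivation.leibniz, derivative_X, Nat.add_sub_cancel]
    simp only [smul_eq_mul, nsmul_eq_mul]
    push_cast
    linear_combination ((j : K⟦X⟧) + 1) * v⁻¹ ^ (j + 1) * hu
  have := congrArg (coeff (j + 1)) key
  rw [map_nsmul, map_sub, map_nsmul, coeff_succ_X_mul, coeff_derivative, nsmul_eq_mul,
    nsmul_eq_mul, Nat.cast_add_one, mul_comm _ ((j : K) + 1), sub_self] at this
  exact (mul_eq_zero.mp this).resolve_left (Nat.cast_add_one_ne_zero j)

-- The change of variables `X ↦ X v` in the residue of `Q / X^(n+1)`.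
theorem coeff_subst_X_mul_mul_derivative_mul_inv_pow {v : K⟦X⟧} (hv : constantCoeff v ≠ 0)
    (Q : K⟦X⟧) (n : ℕ) :
    coeff n (Q.subst (X * v) * (d⁄dX K (X * v) * v⁻¹ ^ (n + 1))) = coeff n Q := by
  have hu : v * v⁻¹ = 1 := PowerSeries.mul_inv_cancel v hv
  have hXv : ∀ m ≤ n, (X * v) ^ m * (d⁄dX K (X * v) * v⁻¹ ^ (n + 1)) =
      X ^ m * (d⁄dX K (X * v) * v⁻¹ ^ (n - m + 1)) := by
    intro m hm
    obtain ⟨j, rfl⟩ := Nat.exists_eq_add_of_le hm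
    have hum : (v * v⁻¹) ^ m = 1 := by rw [hu, one_pow]
    rw [Nat.add_sub_cancel_left]
    linear_combination X ^ m * d⁄dX K (X * v) * v⁻¹ ^ (j + 1) * hum
  rw [coeff_subst_mul_eq_sum (by simp), sum_range_succ, sum_eq_zero, zero_add, hXv n le_rfl,
    coeff_X_pow_mul', if_pos le_rfl, Nat.sub_self, coeff_zero_eq_constantCoeff_apply]
  · simp [hv]
  · intro m hm
    obtain ⟨j, hj⟩ : ∃ j, n = m + (j + 1) := ⟨n - m - 1, by simp at hm; omega⟩
    rw [hXv m (by omega), coeff_X_pow_mul', if_pos (by omega),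
      show n - m = j + 1 by omega, coeff_derivative_X_mul_mul_inv_pow hv, mul_zero]

theorem lagrange_inversion {Φ w : K⟦X⟧} (hΦ : constantCoeff Φ ≠ 0) (hw : w = X * Φ.subst w)
    (H : K⟦X⟧) (n : ℕ) :
    (n + 1) * coeff (n + 1) (H.subst w) = coeff n (d⁄dX K H * Φ ^ (n + 1)) := by
  have hw0 : constantCoeff w = 0 := by rw [hw]; simp
  set v := Φ.subst w with hv
  have hv0 : constantCoeff v ≠ 0 := by
    rwa [hv, constantCoeff_subst_of_constantCoeff_eq_zero hw0]
  have hvu : v ^ (n + 1) * v⁻¹ ^ (n + 1) = 1 := by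
    rw [← mul_pow, PowerSeries.mul_inv_cancel v hv0, one_pow]
  have hW := HasSubst.of_constantCoeff_zero' hw0
  calc (n + 1) * coeff (n + 1) (H.subst w)
      = coeff n ((d⁄dX K H).subst w * d⁄dX K w) := by
        rw [← derivative_subst hW, coeff_derivative, mul_comm]
    _ = coeff n ((d⁄dX K H * Φ ^ (n + 1)).subst w * (d⁄dX K w * v⁻¹ ^ (n + 1))) := by
        rw [subst_mul hW, subst_pow hW, ← hv]
        congr 1
        linear_combination -(d⁄dX K H).subst w * d⁄dX K w * hvu
    _ = _ := by
        rw [hw]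
        exact coeff_subst_X_mul_mul_derivative_mul_inv_pow hv0 _ n

theorem coeff_pow_subst_of_eq_X_mul_subst {F w : K⟦X⟧} {r : ℕ} (hF : constantCoeff F ≠ 0)
    (hw : w = X * (F ^ r).subst w) (s n : ℕ) :
    ((n * r + s : ℕ) : K) * coeff n ((F ^ s).subst w) = s * coeff n (F ^ (n * r + s)) := by
  have hw0 : constantCoeff w = 0 := by rw [hw]; simp
  rcases n with _ | n
  · rw [coeff_zero_eq_constantCoeff_apply, coeff_zero_eq_constantCoeff_apply,
      constantCoeff_subst_of_constantCoeff_eq_zero hw0]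
    simp
  · have hL := lagrange_inversion (by simpa using pow_ne_zero r hF) hw (F ^ s) n
    have hD := congrArg (coeff n) (nsmul_derivative_pow_mul_pow F s ((n + 1) * r))
    rw [← pow_mul'] at hL
    rw [map_nsmul, map_nsmul, coeff_derivative, nsmul_eq_mul, nsmul_eq_mul] at hD
    refine mul_right_cancel₀ (Nat.cast_add_one_ne_zero n) ?_
    push_cast at hD ⊢
    linear_combination hD + (((n : K) + 1) * r + s) * hL

theorem coeff_subst_of_eq_X_mul_subst_of_derivative_mul_eq {F L w : K⟦X⟧} {r : ℕ}
    (hF : constantCoeff F ≠ 0) (hw : w = X * (F ^ r).subst w) (hLF : d⁄dX K L * F = d⁄dX K F)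
    (n : ℕ) :
    (((n + 1) * r : ℕ) : K) * coeff (n + 1) (L.subst w) = coeff (n + 1) (F ^ ((n + 1) * r)) := by
  have hL := lagrange_inversion (by simpa using pow_ne_zero r hF) hw L n
  have hD := congrArg (coeff n) (nsmul_derivative_mul_pow hLF ((n + 1) * r))
  rw [← pow_mul'] at hL
  rw [map_nsmul, coeff_derivative, nsmul_eq_mul] at hD
  refine mul_right_cancel₀ (Nat.cast_add_one_ne_zero n) ?_
  linear_combination hD + (((n + 1) * r : ℕ) : K) * hL

end Field

end PowerSeries

open PowerSeries Nat

noncomputable def F17 (α : ℝ) : ℝ⟦X⟧ := (1 + C α * X) * exp ℝ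

theorem constantCoeff_F17 (α : ℝ) : constantCoeff (F17 α) = 1 := by
  simp [F17]

theorem coeff_F17_pow (α : ℝ) (N n : ℕ) :
    coeff n (F17 α ^ N) = ∑ j ∈ range (n + 1), N.choose j * α ^ j * (N ^ (n - j) / (n - j)!) := by
  have hres : (1 + C α * X : ℝ⟦X⟧) = rescale α (1 + X) := by simp [rescale_X]
  rw [F17, mul_pow, hres, ← map_pow, exp_pow_eq_rescale_exp, coeff_mul,
    Nat.sum_antidiagonal_eq_sum_range_succ_mk]
  refine sum_congr rfl fun j _ => ?_
  rw [coeff_rescale, coeff_one_add_X_pow, coeff_rescale, coeff_exp]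
  simp only [one_div, map_inv₀, map_natCast]
  ring

theorem Z17_eq (r : ℕ) (α : ℝ) (n s : ℕ) :
    Z17 r α n s = n ! * coeff n (F17 α ^ (n * r + s)) / ((n * r + s : ℕ) : ℝ) := by
  rw [Z17, coeff_F17_pow, mul_sum, mul_sum, sum_div]
  refine sum_congr rfl fun j _ => ?_
  ring

theorem mul_Z17_eq_coeff_pow_subst {r s : ℕ} {α : ℝ} {w : ℝ⟦X⟧} (hs : 1 ≤ s)
    (hw : w = X * (F17 α ^ r).subst w) (n : ℕ) :
    s * Z17 r α n s = n ! * coeff n ((F17 α ^ s).subst w) := by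
  have hB := coeff_pow_subst_of_eq_X_mul_subst (by simp [constantCoeff_F17]) hw s n
  have hN : ((n * r + s : ℕ) : ℝ) ≠ 0 := by positivity
  rw [Z17_eq]
  field_simp
  linear_combination -hB

theorem Z17_zero_eq_coeff_subst {r : ℕ} {α : ℝ} {L w : ℝ⟦X⟧} (hr : 1 ≤ r)
    (hw : w = X * (F17 α ^ r).subst w) (hLF : d⁄dX ℝ L * F17 α = d⁄dX ℝ (F17 α)) (m : ℕ) :
    Z17 r α (m + 1) 0 = (m + 1)! * coeff (m + 1) (L.subst w) := by
  have hB := coeff_subst_of_eq_X_mul_subst_of_derivative_mul_eq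
    (by simp [constantCoeff_F17]) hw hLF m
  have hmr : (((m + 1) * r : ℕ) : ℝ) ≠ 0 := by positivity
  rw [Z17_eq, add_zero, ← hB]
  field_simp

theorem bellA_eq_factorial_mul_coeff_exp_subst (n : ℕ) (x : ℕ → ℝ) :
    bellA n x = n ! * coeff n ((exp ℝ).subst (mk fun m => if m = 0 then 0 else x m / (m !))) := by
  set g : ℝ⟦X⟧ := mk fun m => if m = 0 then 0 else x m / (m !)
  have hg : constantCoeff g = 0 := by simp [g]
  rw [coeff_subst_eq_sum hg, bellA]
  split_ifs with hn
  · simp [hn]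
  · have hrange : range (n + 1) = insert 0 (Icc 1 n) := by
      ext k; simp only [mem_range, mem_insert, mem_Icc]; omega
    rw [hrange, sum_insert (by simp), pow_zero, coeff_one, if_neg hn, mul_zero, zero_add,
      mul_sum]
    refine sum_congr rfl fun k _ => ?_
    simp only [bellB, div_eq_mul_inv, coeff_exp, one_mul, map_inv₀, map_natCast, g]
    ring

theorem stmt_17_general (r : ℕ) (hr : 1 ≤ r) (α : ℝ) (n s : ℕ) (hs : 1 ≤ s) :
    bellA n (fun m => (s : ℝ) * Z17 r α m 0) = (s : ℝ) * Z17 r α n s := by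
  have hF : constantCoeff (F17 α) = 1 := constantCoeff_F17 α
  obtain ⟨L, hL0, hLF⟩ := exists_log (F17 α) (by simp [hF])
  obtain ⟨w, hw⟩ := exists_eq_X_mul_subst (Φ := F17 α ^ r) (by simp [hF])
  have hw0 : constantCoeff w = 0 := by rw [hw]; simp
  have hEGF : (mk fun m => if m = 0 then 0 else (s : ℝ) * Z17 r α m 0 / (m !)) =
      s • L.subst w := by
    ext (_ | m)
    · rw [coeff_mk, if_pos rfl, map_nsmul, coeff_zero_eq_constantCoeff_apply,
        constantCoeff_subst_of_constantCoeff_eq_zero hw0, hL0, smul_zero]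
    · rw [coeff_mk, if_neg m.succ_ne_zero, Z17_zero_eq_coeff_subst hr hw hLF, map_nsmul,
        nsmul_eq_mul]
      field_simp
  have hexp := exp_subst_nsmul_eq_pow
    (by rw [constantCoeff_subst_of_constantCoeff_eq_zero hw0, hL0])
    (by rw [constantCoeff_subst_of_constantCoeff_eq_zero hw0, hF])
    (derivative_subst_mul_subst hw0 hLF) s
  rw [bellA_eq_factorial_mul_coeff_exp_subst, hEGF, hexp, mul_Z17_eq_coeff_pow_subst hs hw,
    subst_pow (HasSubst.of_constantCoeff_zero' hw0)]

theorem stmt_17 (r : ℕ) (hr : 1 ≤ r) (α : ℝ) (n s : ℕ) (hn : 1 ≤ n) (hs : 1 ≤ s) :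
    bellA n (fun m => (s : ℝ) * Z17 r α m 0) = (s : ℝ) * Z17 r α n s :=
  stmt_17_general r hr α n s hs
end
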